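/- Suppose ⟨a(x)p, p⟩ ≥ λ‖p‖² for all x, p ∈ ℝᵈ, with λ > 0. Then for every R > 0, every x ∈ ℝᵈ and all y₁, y₂ ∈ ℝᵈ with ‖y₁‖ ≤ R and ‖y₂‖ ≤ R, the quasipotential satisfies |I(x,y₁) − I(x,y₂)| ≤ (1/(2λ)) · ‖y₁ − y₂‖ · (1 + ‖M‖·R)², where ‖M‖ is the operator norm of M; in particular y ↦ I(x,y) is locally Lipschitz continuous. -/

import Mathlib

/-! Concatenating an admissible path from `x` to `y₂` with the unit-speed segment from `y₂` to
`y₁` gives an admissible path from `x` to `y₁`, so `I(x, y₁) ≤ I(x, y₂) + I(y₂, y₁)`. The segment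
takes time `‖y₁ - y₂‖` and stays in the ball of radius `R`; since `⟨a p, p⟩ ≥ λ‖p‖²` gives
`⟨a⁻¹ w, w⟩ ≤ λ⁻¹‖w‖²`, its running cost is at most `(1 + ‖M‖R)² / (2λ)` per unit time. -/

open RealInnerProductSpace MeasureTheory

/-- Multiplication of a vector in `EuclideanSpace ℝ (Fin d)` by a `d × d` real matrix. -/
noncomputable def matVec {d : ℕ} (A : Matrix (Fin d) (Fin d) ℝ)
    (x : EuclideanSpace ℝ (Fin d)) : EuclideanSpace ℝ (Fin d) := WithLp.toLp 2 (A.mulVec x)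

/-- The running cost `L(x,v) = ½⟨a(x)⁻¹(v − Mx), v − Mx⟩` of the exit-time control problem,
where `M` is the closed-loop drift matrix, viewed as a (continuous) linear operator on `ℝᵈ`,
so that `‖M‖` is its operator norm. -/
noncomputable def runCost {d : ℕ}
    (a : EuclideanSpace ℝ (Fin d) → Matrix (Fin d) (Fin d) ℝ)
    (M : EuclideanSpace ℝ (Fin d) →L[ℝ] EuclideanSpace ℝ (Fin d))
    (x v : EuclideanSpace ℝ (Fin d)) : ℝ :=
  (1 / 2) * ⟪matVec (a x)⁻¹ (v - M x), v - M x⟫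

/-- `a` is uniformly elliptic with constants `lam ≤ Lam`:
`lam‖p‖² ≤ ⟨a(x)p, p⟩ ≤ Lam‖p‖²` for all `x, p ∈ ℝᵈ`. -/
def UniformlyElliptic {d : ℕ}
    (a : EuclideanSpace ℝ (Fin d) → Matrix (Fin d) (Fin d) ℝ) (lam Lam : ℝ) : Prop :=
  ∀ x p : EuclideanSpace ℝ (Fin d),
    lam * ‖p‖ ^ 2 ≤ ⟪matVec (a x) p, p⟫ ∧ ⟪matVec (a x) p, p⟫ ≤ Lam * ‖p‖ ^ 2

/-- `φ` is absolutely continuous on `[0,T]` with (a.e.) derivative `g`: `g` is integrable on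
`[0,T]` and `φ(t) = φ(0) + ∫₀ᵗ g(s) ds` for all `t ∈ [0,T]`. -/
def IsAC {d : ℕ} (T : ℝ) (φ g : ℝ → EuclideanSpace ℝ (Fin d)) : Prop :=
  IntegrableOn g (Set.Icc 0 T) ∧
    ∀ t ∈ Set.Icc (0 : ℝ) T, φ t = φ 0 + ∫ s in (0 : ℝ)..t, g s

/-- The action `S_T(φ) = ∫₀ᵀ L(φ(t), φ'(t)) dt` of an absolutely continuous path `φ` with
derivative `g`. -/
noncomputable def action {d : ℕ}
    (a : EuclideanSpace ℝ (Fin d) → Matrix (Fin d) (Fin d) ℝ)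
    (M : EuclideanSpace ℝ (Fin d) →L[ℝ] EuclideanSpace ℝ (Fin d))
    (T : ℝ) (φ g : ℝ → EuclideanSpace ℝ (Fin d)) : ℝ :=
  ∫ t in (0 : ℝ)..T, runCost a M (φ t) (g t)

/-- The quasipotential `I(x,y)`: the infimum of the action `S_T(φ)` over all `T ≥ 0` and all
absolutely continuous paths `φ : [0,T] → ℝᵈ` (with integrable running cost, i.e. finite
action) with `φ(0) = x` and `φ(T) = y`. -/
noncomputable def quasipotential {d : ℕ}
    (a : EuclideanSpace ℝ (Fin d) → Matrix (Fin d) (Fin d) ℝ)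
    (M : EuclideanSpace ℝ (Fin d) →L[ℝ] EuclideanSpace ℝ (Fin d))
    (x y : EuclideanSpace ℝ (Fin d)) : ℝ :=
  sInf {r : ℝ | ∃ T : ℝ, 0 ≤ T ∧ ∃ φ g : ℝ → EuclideanSpace ℝ (Fin d),
    IsAC T φ g ∧ IntegrableOn (fun t => runCost a M (φ t) (g t)) (Set.Icc 0 T) ∧
    φ 0 = x ∧ φ T = y ∧ r = action a M T φ g}

open Set

section PathConcat

variable {α : Type*}

noncomputable def pathConcat (T : ℝ) (f g : ℝ → α) (t : ℝ) : α :=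
  if t ≤ T then f t else g (t - T)

variable {T s t : ℝ} {f g : ℝ → α}

theorem pathConcat_of_le (ht : t ≤ T) : pathConcat T f g t = f t := if_pos ht

theorem pathConcat_of_lt (ht : T < t) : pathConcat T f g t = g (t - T) := if_neg ht.not_ge

theorem pathConcat_add (hjoin : g 0 = f T) (hs : 0 ≤ s) : pathConcat T f g (T + s) = g s := by
  rcases hs.eq_or_lt with rfl | hs
  · rw [add_zero, pathConcat_of_le le_rfl, hjoin]
  · rw [pathConcat_of_lt (lt_add_of_pos_right T hs), add_sub_cancel_left]

theorem eqOn_pathConcat_uIcc (hT : 0 ≤ T) : EqOn (pathConcat T f g) f (uIcc 0 T) :=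
  fun _ ht => pathConcat_of_le (by simpa [hT] using ht.2)

theorem eqOn_pathConcat_uIoc (hs : 0 ≤ s) :
    EqOn (pathConcat T f g) (fun t => g (t - T)) (uIoc T (T + s)) :=
  fun _ ht => pathConcat_of_lt (by simpa [hs] using ht.1)

variable {E : Type*} [NormedAddCommGroup E] {f g : ℝ → E}

theorem intervalIntegrable_pathConcat (hT : 0 ≤ T) (hs : 0 ≤ s)
    (hf : IntervalIntegrable f volume 0 T) (hg : IntervalIntegrable g volume 0 s) :
    IntervalIntegrable (pathConcat T f g) volume 0 (T + s) := by
  have hright := hg.comp_sub_right T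
  rw [zero_add, add_comm s] at hright
  exact (hf.congr fun _ ht => (eqOn_pathConcat_uIcc hT (uIoc_subset_uIcc ht)).symm).trans
    (hright.congr (eqOn_pathConcat_uIoc hs).symm)

theorem integral_pathConcat [NormedSpace ℝ E] (hT : 0 ≤ T) (hs : 0 ≤ s)
    (hf : IntervalIntegrable f volume 0 T) (hg : IntervalIntegrable g volume 0 s) :
    ∫ t in 0..T + s, pathConcat T f g t = (∫ t in 0..T, f t) + ∫ t in 0..s, g t := by
  have hint := intervalIntegrable_pathConcat hT hs hf hg
  have hTmem : T ∈ uIcc 0 (T + s) := mem_uIcc_of_le hT (le_add_of_nonneg_right hs)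
  rw [← intervalIntegral.integral_add_adjacent_intervals
      (hint.mono_set (uIcc_subset_uIcc left_mem_uIcc hTmem))
      (hint.mono_set (uIcc_subset_uIcc hTmem right_mem_uIcc)),
    intervalIntegral.integral_congr (eqOn_pathConcat_uIcc hT),
    intervalIntegral.integral_congr_ae (.of_forall fun _ => (eqOn_pathConcat_uIoc hs ·)),
    intervalIntegral.integral_comp_sub_right, sub_self, add_sub_cancel_left]

end PathConcat

section Coercive

variable {d : ℕ} {A : Matrix (Fin d) (Fin d) ℝ} {lam : ℝ}

theorem matVec_matVec_inv (hA : IsUnit A.det) (w : EuclideanSpace ℝ (Fin d)) :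
    matVec A (matVec A⁻¹ w) = w := by
  simp [matVec, Matrix.mulVec_mulVec, Matrix.mul_nonsing_inv _ hA]

theorem isUnit_det_of_coercive (hlam : 0 < lam)
    (hA : ∀ p, lam * ‖p‖ ^ 2 ≤ ⟪matVec A p, p⟫) : IsUnit A.det := by
  rw [isUnit_iff_ne_zero]
  intro h0
  obtain ⟨v, hv, hAv⟩ := Matrix.exists_mulVec_eq_zero_iff.2 h0
  have hpos : 0 < ‖WithLp.toLp 2 v‖ := norm_pos_iff.2 (by simpa using hv)
  have := hA (WithLp.toLp 2 v)
  simp [matVec, hAv] at this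
  exact this.not_gt (by positivity)

theorem mul_sq_norm_le_inner_matVec_inv (hlam : 0 < lam)
    (hA : ∀ p, lam * ‖p‖ ^ 2 ≤ ⟪matVec A p, p⟫) (w : EuclideanSpace ℝ (Fin d)) :
    lam * ‖matVec A⁻¹ w‖ ^ 2 ≤ ⟪matVec A⁻¹ w, w⟫ := by
  simpa [matVec_matVec_inv (isUnit_det_of_coercive hlam hA), real_inner_comm]
    using hA (matVec A⁻¹ w)

theorem inner_matVec_inv_le (hlam : 0 < lam)
    (hA : ∀ p, lam * ‖p‖ ^ 2 ≤ ⟪matVec A p, p⟫) (w : EuclideanSpace ℝ (Fin d)) :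
    ⟪matVec A⁻¹ w, w⟫ ≤ lam⁻¹ * ‖w‖ ^ 2 := by
  have hcoer := mul_sq_norm_le_inner_matVec_inv hlam hA w
  have hCS := real_inner_le_norm (matVec A⁻¹ w) w
  rw [le_inv_mul_iff₀ hlam]
  nlinarith [sq_nonneg (‖w‖ - lam * ‖matVec A⁻¹ w‖), norm_nonneg (matVec A⁻¹ w), norm_nonneg w]

end Coercive

section RunCost

variable {d : ℕ} {a : EuclideanSpace ℝ (Fin d) → Matrix (Fin d) (Fin d) ℝ}
  {M : EuclideanSpace ℝ (Fin d) →L[ℝ] EuclideanSpace ℝ (Fin d)} {lam : ℝ}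

theorem runCost_nonneg (hlam : 0 < lam)
    (hlow : ∀ x p, lam * ‖p‖ ^ 2 ≤ ⟪matVec (a x) p, p⟫) (x v : EuclideanSpace ℝ (Fin d)) :
    0 ≤ runCost a M x v :=
  mul_nonneg (by norm_num) ((mul_nonneg hlam.le (sq_nonneg _)).trans
    (mul_sq_norm_le_inner_matVec_inv hlam (hlow x) _))

theorem runCost_le (hlam : 0 < lam)
    (hlow : ∀ x p, lam * ‖p‖ ^ 2 ≤ ⟪matVec (a x) p, p⟫) (x v : EuclideanSpace ℝ (Fin d)) :
    runCost a M x v ≤ 1 / (2 * lam) * (‖v‖ + ‖M‖ * ‖x‖) ^ 2 := by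
  have hdrift : ‖v - M x‖ ≤ ‖v‖ + ‖M‖ * ‖x‖ :=
    (norm_sub_le _ _).trans (add_le_add_right (M.le_opNorm x) _)
  calc runCost a M x v ≤ 1 / 2 * (lam⁻¹ * ‖v - M x‖ ^ 2) :=
        mul_le_mul_of_nonneg_left (inner_matVec_inv_le hlam (hlow x) _) (by norm_num)
    _ ≤ 1 / 2 * (lam⁻¹ * (‖v‖ + ‖M‖ * ‖x‖) ^ 2) := by gcongr
    _ = 1 / (2 * lam) * (‖v‖ + ‖M‖ * ‖x‖) ^ 2 := by field_simp

theorem Continuous.runCost {X : Type*} [TopologicalSpace X] (hacont : Continuous a)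
    (hdet : ∀ x, IsUnit (a x).det) {φ g : X → EuclideanSpace ℝ (Fin d)}
    (hφ : Continuous φ) (hg : Continuous g) :
    Continuous fun t => runCost a M (φ t) (g t) := by
  have hinv : Continuous fun x => (a x)⁻¹ := continuous_iff_continuousAt.2 fun x =>
    (continuousAt_matrix_inv _ (by
      rw [Ring.inverse_eq_inv']; exact continuousAt_inv₀ (hdet x).ne_zero)).comp
      hacont.continuousAt
  unfold _root_.runCost matVec
  have hw : Continuous fun t => g t - M (φ t) := by fun_prop
  have hu := (PiLp.continuous_toLp 2 _).comp
    ((hinv.comp hφ).matrix_mulVec ((PiLp.continuous_ofLp 2 _).comp hw))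
  exact continuous_const.mul (hu.inner hw)

end RunCost

section Paths

variable {d : ℕ} {T s : ℝ} {φ g ψ h : ℝ → EuclideanSpace ℝ (Fin d)}

theorem IsAC.intervalIntegrable (hφ : IsAC T φ g) {t : ℝ} (ht : t ∈ Icc 0 T) :
    IntervalIntegrable g volume 0 t :=
  (intervalIntegrable_iff_integrableOn_Icc_of_le ht.1).2
    (hφ.1.mono_set (Icc_subset_Icc_right ht.2))

theorem IsAC.pathConcat (hT : 0 ≤ T) (hs : 0 ≤ s) (hφ : IsAC T φ g) (hψ : IsAC s ψ h)
    (hjoin : ψ 0 = φ T) : IsAC (T + s) (pathConcat T φ ψ) (pathConcat T g h) := by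
  have hg := hφ.intervalIntegrable ⟨hT, le_rfl⟩
  refine ⟨(intervalIntegrable_iff_integrableOn_Icc_of_le (add_nonneg hT hs)).1
    (intervalIntegrable_pathConcat hT hs hg (hψ.intervalIntegrable ⟨hs, le_rfl⟩)), fun t ht => ?_⟩
  rw [pathConcat_of_le hT]
  rcases le_or_gt t T with htT | hTt
  · rw [pathConcat_of_le htT, hφ.2 t ⟨ht.1, htT⟩,
      intervalIntegral.integral_congr fun u hu =>
        pathConcat_of_le ((show u ≤ t by simpa [ht.1] using hu.2).trans htT)]
  · obtain ⟨u, hu, rfl⟩ : ∃ u ∈ Icc 0 s, t = T + u :=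
      ⟨t - T, ⟨by linarith, by linarith [ht.2]⟩, by ring⟩
    rw [pathConcat_add hjoin hu.1, integral_pathConcat hT hu.1 hg (hψ.intervalIntegrable hu),
      hψ.2 u hu, hjoin, hφ.2 T ⟨hT, le_rfl⟩, add_assoc]

theorem isAC_affine (T : ℝ) (y v : EuclideanSpace ℝ (Fin d)) :
    IsAC T (fun t => y + t • v) (fun _ => v) :=
  ⟨integrableOn_const measure_Icc_lt_top.ne, fun t _ => by simp [intervalIntegral.integral_const]⟩

end Paths

section Quasipotential

variable {d : ℕ} {a : EuclideanSpace ℝ (Fin d) → Matrix (Fin d) (Fin d) ℝ}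
  {M : EuclideanSpace ℝ (Fin d) →L[ℝ] EuclideanSpace ℝ (Fin d)} {lam : ℝ}
  {x y z : EuclideanSpace ℝ (Fin d)}

def admissibleActions (a : EuclideanSpace ℝ (Fin d) → Matrix (Fin d) (Fin d) ℝ)
    (M : EuclideanSpace ℝ (Fin d) →L[ℝ] EuclideanSpace ℝ (Fin d))
    (x y : EuclideanSpace ℝ (Fin d)) : Set ℝ :=
  {r : ℝ | ∃ T : ℝ, 0 ≤ T ∧ ∃ φ g : ℝ → EuclideanSpace ℝ (Fin d),
    IsAC T φ g ∧ IntegrableOn (fun t => runCost a M (φ t) (g t)) (Set.Icc 0 T) ∧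
    φ 0 = x ∧ φ T = y ∧ r = action a M T φ g}

theorem quasipotential_eq_sInf :
    quasipotential a M x y = sInf (admissibleActions a M x y) := rfl

theorem add_mem_admissibleActions {r s : ℝ} (hr : r ∈ admissibleActions a M x y)
    (hs : s ∈ admissibleActions a M y z) : r + s ∈ admissibleActions a M x z := by
  obtain ⟨T, hT, φ, g, hφ, hcφ, hφ0, hφT, rfl⟩ := hr
  obtain ⟨S, hS, ψ, h, hψ, hcψ, hψ0, hψS, rfl⟩ := hs
  have hjoin : ψ 0 = φ T := hψ0.trans hφT.symm
  have hcost : (fun t => runCost a M (pathConcat T φ ψ t) (pathConcat T g h t)) =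
      pathConcat T (fun t => runCost a M (φ t) (g t)) (fun t => runCost a M (ψ t) (h t)) := by
    funext t
    unfold pathConcat
    split_ifs <;> rfl
  have hcφ' := (intervalIntegrable_iff_integrableOn_Icc_of_le hT).2 hcφ
  have hcψ' := (intervalIntegrable_iff_integrableOn_Icc_of_le hS).2 hcψ
  refine ⟨T + S, add_nonneg hT hS, pathConcat T φ ψ, pathConcat T g h,
    hφ.pathConcat hT hS hψ hjoin, ?_, by rw [pathConcat_of_le hT, hφ0],
    by rw [pathConcat_add hjoin hS, hψS], ?_⟩
  · rw [hcost, ← intervalIntegrable_iff_integrableOn_Icc_of_le (add_nonneg hT hS)]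
    exact intervalIntegrable_pathConcat hT hS hcφ' hcψ'
  · unfold action
    rw [hcost, integral_pathConcat hT hS hcφ' hcψ']

theorem nonneg_of_mem_admissibleActions (hlam : 0 < lam)
    (hlow : ∀ x p, lam * ‖p‖ ^ 2 ≤ ⟪matVec (a x) p, p⟫) {r : ℝ}
    (hr : r ∈ admissibleActions a M x y) : 0 ≤ r := by
  obtain ⟨T, hT, φ, g, -, -, -, -, rfl⟩ := hr
  exact intervalIntegral.integral_nonneg hT fun t _ => runCost_nonneg hlam hlow _ _

theorem exists_mem_admissibleActions_le (hacont : Continuous a) (hlam : 0 < lam)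
    (hlow : ∀ x p, lam * ‖p‖ ^ 2 ≤ ⟪matVec (a x) p, p⟫) {R : ℝ} (hy : ‖y‖ ≤ R) (hz : ‖z‖ ≤ R) :
    ∃ s ∈ admissibleActions a M y z, s ≤ 1 / (2 * lam) * ‖z - y‖ * (1 + ‖M‖ * R) ^ 2 := by
  set τ := ‖z - y‖
  set v := τ⁻¹ • (z - y) with hv
  have hv_le : ‖v‖ ≤ 1 := by
    rw [hv, norm_smul, norm_inv, Real.norm_of_nonneg (norm_nonneg _)]
    exact inv_mul_le_one_of_le₀ le_rfl (norm_nonneg _)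
  have hend : y + τ • v = z := by
    rcases eq_or_ne τ 0 with h | h
    · rw [h, zero_smul, add_zero]
      exact (sub_eq_zero.1 (norm_eq_zero.1 h)).symm
    · rw [hv, smul_inv_smul₀ h, add_sub_cancel]
  have hsegment : ∀ t ∈ Icc 0 τ, ‖y + t • v‖ ≤ R := fun t ht => by
    have := (convex_closedBall (0 : EuclideanSpace ℝ (Fin d)) R).add_smul_mem
      (mem_closedBall_zero_iff.2 hy) (y := z - y) (by rwa [add_sub_cancel, mem_closedBall_zero_iff])
      ⟨div_nonneg ht.1 (norm_nonneg _), div_le_one_of_le₀ ht.2 (norm_nonneg _)⟩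
    rwa [mem_closedBall_zero_iff, div_eq_mul_inv, ← smul_smul] at this
  have hcont : Continuous fun t : ℝ => runCost a M (y + t • v) v :=
    hacont.runCost (fun x => isUnit_det_of_coercive hlam (hlow x)) (by fun_prop) continuous_const
  refine ⟨action a M τ (fun t => y + t • v) (fun _ => v),
    ⟨τ, norm_nonneg _, _, _, isAC_affine τ y v, hcont.integrableOn_Icc, by simp, hend, rfl⟩, ?_⟩
  calc action a M τ (fun t => y + t • v) (fun _ => v)
      ≤ ∫ _ in 0..τ, 1 / (2 * lam) * (1 + ‖M‖ * R) ^ 2 :=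
        intervalIntegral.integral_mono_on (norm_nonneg _) (hcont.intervalIntegrable _ _)
          intervalIntegrable_const fun t ht =>
            (runCost_le hlam hlow _ _).trans (by gcongr; exact hsegment t ht)
    _ = 1 / (2 * lam) * τ * (1 + ‖M‖ * R) ^ 2 := by
        rw [intervalIntegral.integral_const, sub_zero, smul_eq_mul]
        ring

theorem bddBelow_admissibleActions (hlam : 0 < lam)
    (hlow : ∀ x p, lam * ‖p‖ ^ 2 ≤ ⟪matVec (a x) p, p⟫) :
    BddBelow (admissibleActions a M x y) :=
  ⟨0, fun _ => nonneg_of_mem_admissibleActions hlam hlow⟩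

theorem admissibleActions_nonempty (hacont : Continuous a) (hlam : 0 < lam)
    (hlow : ∀ x p, lam * ‖p‖ ^ 2 ≤ ⟪matVec (a x) p, p⟫) :
    (admissibleActions a M x y).Nonempty :=
  let ⟨s, hs, _⟩ := exists_mem_admissibleActions_le hacont hlam hlow
    (le_max_left ‖x‖ ‖y‖) (le_max_right _ _)
  ⟨s, hs⟩

theorem quasipotential_le_add (hacont : Continuous a) (hlam : 0 < lam)
    (hlow : ∀ x p, lam * ‖p‖ ^ 2 ≤ ⟪matVec (a x) p, p⟫) :
    quasipotential a M x z ≤ quasipotential a M x y + quasipotential a M y z := by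
  simp only [quasipotential_eq_sInf]
  rw [← sub_le_iff_le_add]
  refine le_csInf (admissibleActions_nonempty hacont hlam hlow) fun r hr => ?_
  rw [sub_le_comm]
  refine le_csInf (admissibleActions_nonempty hacont hlam hlow) fun s hs => ?_
  rw [sub_le_iff_le_add']
  exact csInf_le (bddBelow_admissibleActions hlam hlow) (add_mem_admissibleActions hr hs)

theorem quasipotential_le_add_mul_norm_sub (hacont : Continuous a) (hlam : 0 < lam)
    (hlow : ∀ x p, lam * ‖p‖ ^ 2 ≤ ⟪matVec (a x) p, p⟫) {R : ℝ} {y₁ y₂ : EuclideanSpace ℝ (Fin d)}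
    (hy₁ : ‖y₁‖ ≤ R) (hy₂ : ‖y₂‖ ≤ R) :
    quasipotential a M x y₁ ≤
      quasipotential a M x y₂ + 1 / (2 * lam) * ‖y₁ - y₂‖ * (1 + ‖M‖ * R) ^ 2 := by
  obtain ⟨s, hs, hsle⟩ := exists_mem_admissibleActions_le (M := M) hacont hlam hlow hy₂ hy₁
  calc quasipotential a M x y₁ ≤ quasipotential a M x y₂ + quasipotential a M y₂ y₁ :=
        quasipotential_le_add hacont hlam hlow
    _ ≤ _ := add_le_add_right ((csInf_le (bddBelow_admissibleActions hlam hlow) hs).trans hsle) _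

theorem abs_quasipotential_sub_le (hacont : Continuous a) (hlam : 0 < lam)
    (hlow : ∀ x p, lam * ‖p‖ ^ 2 ≤ ⟪matVec (a x) p, p⟫) {R : ℝ} {y₁ y₂ : EuclideanSpace ℝ (Fin d)}
    (hy₁ : ‖y₁‖ ≤ R) (hy₂ : ‖y₂‖ ≤ R) :
    |quasipotential a M x y₁ - quasipotential a M x y₂| ≤
      1 / (2 * lam) * ‖y₁ - y₂‖ * (1 + ‖M‖ * R) ^ 2 := by
  have h₁ := quasipotential_le_add_mul_norm_sub (M := M) (x := x) hacont hlam hlow hy₁ hy₂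
  have h₂ := quasipotential_le_add_mul_norm_sub (M := M) (x := x) hacont hlam hlow hy₂ hy₁
  rw [norm_sub_rev] at h₂
  exact abs_sub_le_iff.2 ⟨by linarith, by linarith⟩

end Quasipotential

theorem locallyLipschitz_of_lipschitzOnWith_closedBall {α β : Type*} [PseudoMetricSpace α]
    [PseudoEMetricSpace β] {f : α → β} (c : α)
    (h : ∀ R, ∃ K, LipschitzOnWith K f (Metric.closedBall c R)) : LocallyLipschitz f := fun x =>
  let ⟨K, hK⟩ := h (dist x c + 1)
  ⟨K, _, Metric.closedBall_mem_nhds_of_mem (by simp [Metric.mem_ball]), hK⟩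

theorem quasipotential_locally_lipschitz_general {d : ℕ}
    (a : EuclideanSpace ℝ (Fin d) → Matrix (Fin d) (Fin d) ℝ)
    (M : EuclideanSpace ℝ (Fin d) →L[ℝ] EuclideanSpace ℝ (Fin d))
    (hacont : Continuous a)
    (lam : ℝ) (hlam : 0 < lam)
    (hlow : ∀ x p : EuclideanSpace ℝ (Fin d), lam * ‖p‖ ^ 2 ≤ ⟪matVec (a x) p, p⟫) :
    (∀ R : ℝ, 0 < R → ∀ x y₁ y₂ : EuclideanSpace ℝ (Fin d), ‖y₁‖ ≤ R → ‖y₂‖ ≤ R →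
        |quasipotential a M x y₁ - quasipotential a M x y₂| ≤
          (1 / (2 * lam)) * ‖y₁ - y₂‖ * (1 + ‖M‖ * R) ^ 2) ∧
      ∀ x : EuclideanSpace ℝ (Fin d),
        LocallyLipschitz (fun y => quasipotential a M x y) := by
  refine ⟨fun R _ x y₁ y₂ hy₁ hy₂ => abs_quasipotential_sub_le hacont hlam hlow hy₁ hy₂,
    fun x => locallyLipschitz_of_lipschitzOnWith_closedBall 0 fun R => ⟨_,
      LipschitzOnWith.of_dist_le' (K := 1 / (2 * lam) * (1 + ‖M‖ * R) ^ 2) fun y₁ hy₁ y₂ hy₂ => ?_⟩⟩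
  rw [Real.dist_eq, dist_eq_norm]
  exact (abs_quasipotential_sub_le hacont hlam hlow (mem_closedBall_zero_iff.1 hy₁)
    (mem_closedBall_zero_iff.1 hy₂)).trans_eq (by ring)

/-- Local Lipschitz continuity of the quasipotential in its endpoint: if
`⟨a(x)p, p⟩ ≥ λ‖p‖²` for all `x, p`, with `λ > 0`, then for every `R > 0`, `x`, and
`y₁, y₂` with `‖y₁‖ ≤ R`, `‖y₂‖ ≤ R`,
`|I(x,y₁) − I(x,y₂)| ≤ (1/(2λ))·‖y₁ − y₂‖·(1 + ‖M‖·R)²`; in particular `y ↦ I(x,y)` is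
locally Lipschitz. -/
theorem quasipotential_locally_lipschitz {d : ℕ}
    (a : EuclideanSpace ℝ (Fin d) → Matrix (Fin d) (Fin d) ℝ)
    (M : EuclideanSpace ℝ (Fin d) →L[ℝ] EuclideanSpace ℝ (Fin d))
    (hapos : ∀ x, (a x).PosDef) (hacont : Continuous a)
    (lam : ℝ) (hlam : 0 < lam)
    (hlow : ∀ x p : EuclideanSpace ℝ (Fin d), lam * ‖p‖ ^ 2 ≤ ⟪matVec (a x) p, p⟫) :
    (∀ R : ℝ, 0 < R → ∀ x y₁ y₂ : EuclideanSpace ℝ (Fin d), ‖y₁‖ ≤ R → ‖y₂‖ ≤ R →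
        |quasipotential a M x y₁ - quasipotential a M x y₂| ≤
          (1 / (2 * lam)) * ‖y₁ - y₂‖ * (1 + ‖M‖ * R) ^ 2) ∧
      ∀ x : EuclideanSpace ℝ (Fin d),
        LocallyLipschitz (fun y => quasipotential a M x y) :=
  quasipotential_locally_lipschitz_general a M hacont lam hlam hlow
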